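/- Let A = a₀ + 𝐚 + 𝒜 + a₁₂₃I be a multivector in Cl(0,3) with a₊ > 0 and a₋ > 0. Then exp A = b₀ + b₁e₁ + b₂e₂ + b₃e₃ + b₁₂e₁₂ + b₁₃e₁₃ + b₂₃e₂₃ + b₁₂₃I, where b₀ = (1/2)e^{a₀}(e^{a₁₂₃}cos a₊ + e^{-a₁₂₃}cos a₋), b₁₂₃ = (1/2)e^{a₀}(e^{a₁₂₃}cos a₊ - e^{-a₁₂₃}cos a₋), b₁ = (1/2)e^{a₀}(e^{a₁₂₃}(a₁ - a₂₃)(sin a₊)/a₊ + e^{-a₁₂₃}(a₁ + a₂₃)(sin a₋)/a₋), b₂ = (1/2)e^{a₀}(e^{a₁₂₃}(a₂ + a₁₃)(sin a₊)/a₊ + e^{-a₁₂₃}(a₂ - a₁₃)(sin a₋)/a₋), b₃ = (1/2)e^{a₀}(e^{a₁₂₃}(a₃ - a₁₂)(sin a₊)/a₊ + e^{-a₁₂₃}(a₃ + a₁₂)(sin a₋)/a₋), b₁₂ = (1/2)e^{a₀}(-e^{a₁₂₃}(a₃ - a₁₂)(sin a₊)/a₊ + e^{-a₁₂₃}(a₃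 + a₁₂)(sin a₋)/a₋), b₁₃ = (1/2)e^{a₀}(e^{a₁₂₃}(a₂ + a₁₃)(sin a₊)/a₊ - e^{-a₁₂₃}(a₂ - a₁₃)(sin a₋)/a₋), and b₂₃ = (1/2)e^{a₀}(-e^{a₁₂₃}(a₁ - a₂₃)(sin a₊)/a₊ + e^{-a₁₂₃}(a₁ + a₂₃)(sin a₋)/a₋). -/

import Mathlib

open Real CliffordAlgebra

noncomputable section

/-- The quadratic form of signature (0,3): `Q(x) = -(x₁² + x₂² + x₃²)`. -/
def Q03 : QuadraticForm ℝ (Fin 3 → ℝ) := QuadraticMap.weightedSumSquares ℝ ![-1, -1, -1]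

/-- The real Clifford algebra Cl(0,3). -/
abbrev Cl03 := CliffordAlgebra Q03

/-- The canonical (module) topology on the finite-dimensional real algebra Cl(0,3). -/
instance : TopologicalSpace Cl03 := moduleTopology ℝ Cl03

/-- The orthonormal generators `e₁, e₂, e₃` (indexed here by `0, 1, 2`). -/
def e (i : Fin 3) : Cl03 := ι Q03 (Pi.single i 1)

/-- The pseudoscalar `I = e₁e₂e₃`. -/
def I3 : Cl03 := e 0 * e 1 * e 2

/-- The exponential `exp M = ∑ₖ Mᵏ/k!` in Cl(0,3). -/
def expCl (M : Cl03) : Cl03 := ∑' n : ℕ, (n.factorial : ℝ)⁻¹ • M ^ n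

/-- `atan2 y x` is the argument in `(-π, π]` of the complex number `x + iy`. -/
def atan2 (y x : ℝ) : ℝ := Complex.arg ⟨x, y⟩

-- topology infrastructure
instance : IsModuleTopology ℝ Cl03 := ⟨rfl⟩
instance : ContinuousAdd Cl03 := IsModuleTopology.toContinuousAdd ℝ Cl03

instance : T2Space Cl03 := by
  classical
  let B := Module.Basis.ofVectorSpace ℝ Cl03
  let L : Cl03 →ₗ[ℝ] (Module.Basis.ofVectorSpaceIndex ℝ Cl03 → ℝ) :=
    Finsupp.lcoeFun.comp B.repr.toLinearMap
  have hinj : Function.Injective L := by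
    intro x y h
    exact B.repr.injective (DFunLike.coe_injective h)
  exact T2Space.of_injective_continuous hinj (IsModuleTopology.continuous_of_linearMap L)

instance : IsModuleTopology ℝ ℂ := by
  apply IsModuleTopology.of_continuous_id
  have h : @Continuous ℂ ℂ _ (moduleTopology ℝ ℂ)
      (fun z => z.re • (1:ℂ) + z.im • Complex.I) := by
    exact @Continuous.add ℂ (moduleTopology ℝ ℂ) _ (ModuleTopology.continuousAdd ℝ ℂ) ℂ _ _ _
      (@Continuous.smul ℝ ℂ ℂ _ (moduleTopology ℝ ℂ) _ _ (ModuleTopology.continuousSMul ℝ ℂ) _ _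
        Complex.continuous_re (@continuous_const ℂ ℂ _ (moduleTopology ℝ ℂ) _))
      (@Continuous.smul ℝ ℂ ℂ _ (moduleTopology ℝ ℂ) _ _ (ModuleTopology.continuousSMul ℝ ℂ) _ _
        Complex.continuous_im (@continuous_const ℂ ℂ _ (moduleTopology ℝ ℂ) _))
  have : (fun z : ℂ => z.re • (1:ℂ) + z.im • Complex.I) = id := by
    funext z
    simp [Complex.real_smul, Complex.re_add_im]
  rwa [this] at h

-- Clifford arithmetic
lemma e_sq (i : Fin 3) : e i * e i = -1 := by
  rw [e, CliffordAlgebra.ι_sq_scalar]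
  have h : Q03 (Pi.single i 1) = -1 := by
    fin_cases i <;>
      simp [Q03, QuadraticMap.weightedSumSquares_apply, Fin.sum_univ_three, Pi.single_apply]
  rw [h, map_neg, map_one]

lemma e_anti {i j : Fin 3} (h : i ≠ j) : e j * e i = -(e i * e j) := by
  have hp : QuadraticMap.polar (⇑Q03) (Pi.single i (1:ℝ)) (Pi.single j 1) = 0 := by
    fin_cases i <;> fin_cases j <;> simp_all [QuadraticMap.polar, Q03,
      QuadraticMap.weightedSumSquares_apply, Fin.sum_univ_three, Pi.single_apply]
  have h2 := CliffordAlgebra.ι_mul_ι_add_swap (Q := Q03) (Pi.single i 1) (Pi.single j 1)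
  rw [hp, map_zero] at h2
  rw [e, e]
  linear_combination (norm := noncomm_ring) h2

lemma e10 : e 1 * e 0 = -(e 0 * e 1) := e_anti (by decide)
lemma e20 : e 2 * e 0 = -(e 0 * e 2) := e_anti (by decide)
lemma e21 : e 2 * e 1 = -(e 1 * e 2) := e_anti (by decide)
lemma e10' (x : Cl03) : e 1 * (e 0 * x) = -(e 0 * (e 1 * x)) := by
  rw [← mul_assoc, e10, neg_mul, mul_assoc]
lemma e20' (x : Cl03) : e 2 * (e 0 * x) = -(e 0 * (e 2 * x)) := by
  rw [← mul_assoc, e20, neg_mul, mul_assoc]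
lemma e21' (x : Cl03) : e 2 * (e 1 * x) = -(e 1 * (e 2 * x)) := by
  rw [← mul_assoc, e21, neg_mul, mul_assoc]
lemma e_sq' (i : Fin 3) (x : Cl03) : e i * (e i * x) = -x := by
  rw [← mul_assoc, e_sq, neg_one_mul]

lemma I3_sq : I3 * I3 = 1 := by
  simp only [I3, mul_assoc, e10, e20, e21, e10', e20', e21', e_sq, e_sq',
    mul_neg, neg_mul, neg_neg, mul_one, one_mul]

lemma Ie0 : I3 * e 0 = e 0 * I3 := by
  simp only [I3, mul_assoc, e10, e20, e21, e10', e20', e21', e_sq, e_sq',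
    mul_neg, neg_mul, neg_neg, mul_one, one_mul]
lemma Ie1 : I3 * e 1 = e 1 * I3 := by
  simp only [I3, mul_assoc, e10, e20, e21, e10', e20', e21', e_sq, e_sq',
    mul_neg, neg_mul, neg_neg, mul_one, one_mul]
lemma Ie2 : I3 * e 2 = e 2 * I3 := by
  simp only [I3, mul_assoc, e10, e20, e21, e10', e20', e21', e_sq, e_sq',
    mul_neg, neg_mul, neg_neg, mul_one, one_mul]

lemma iota_decomp (m : Fin 3 → ℝ) : ι Q03 m = m 0 • e 0 + m 1 • e 1 + m 2 • e 2 := by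
  have hm : m = m 0 • (Pi.single 0 1 : Fin 3 → ℝ) + m 1 • (Pi.single 1 1 : Fin 3 → ℝ) + m 2 • (Pi.single 2 1 : Fin 3 → ℝ) := by
    funext j; fin_cases j <;> simp [Pi.single_apply]
  conv_lhs => rw [hm, map_add, map_add, map_smul, map_smul, map_smul]
  rfl

lemma I3_comm (x : Cl03) : x * I3 = I3 * x := by
  induction x using CliffordAlgebra.induction with
  | algebraMap r => rw [Algebra.commutes]
  | ι m =>
      rw [iota_decomp]
      simp only [add_mul, mul_add, smul_mul_assoc, mul_smul_comm, Ie0, Ie1, Ie2]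
  | mul a b ha hb => rw [mul_assoc, hb, ← mul_assoc, ha, mul_assoc]
  | add a b ha hb => rw [add_mul, mul_add, ha, hb]

lemma pow_mul_central {p A M : Cl03} (hp : ∀ x : Cl03, x * p = p * x)
    (h : A * p = M * p) : ∀ n : ℕ, A ^ n * p = M ^ n * p := by
  intro n
  induction n with
  | zero => simp
  | succ n ih =>
      rw [pow_succ, pow_succ, mul_assoc, h, hp M, ← mul_assoc, ih, mul_assoc, ← hp M, ← mul_assoc]

lemma hasSum_cexp (z : ℂ) :
    HasSum (fun n : ℕ => (n.factorial : ℝ)⁻¹ • z ^ n) (Complex.exp z) := by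
  have h := NormedSpace.expSeries_div_hasSum_exp z
  rw [← Complex.exp_eq_exp_ℂ] at h
  convert h using 2 with n
  · rfl
  rw [Complex.real_smul, div_eq_mul_inv]
  push_cast
  ring


set_option maxHeartbeats 2000000 in
/-- coordinate form of the exponential of a multivector in Cl(0,3). -/
theorem exp_coordinates_Cl03
    (a0 a1 a2 a3 a12 a13 a23 a123 ap am : ℝ)
    (b0 b1 b2 b3 b12 b13 b23 b123 : ℝ)
    (va bA A : Cl03)
    (hva : va = a1 • e 0 + a2 • e 1 + a3 • e 2)
    (hbA : bA = a12 • (e 0 * e 1) + a13 • (e 0 * e 2) + a23 • (e 1 * e 2))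
    (hA : A = algebraMap ℝ Cl03 a0 + va + bA + a123 • I3)
    (hap : ap = Real.sqrt ((a3 - a12) ^ 2 + (a2 + a13) ^ 2 + (a1 - a23) ^ 2))
    (ham : am = Real.sqrt ((a3 + a12) ^ 2 + (a2 - a13) ^ 2 + (a1 + a23) ^ 2))
    (happos : 0 < ap) (hampos : 0 < am)
    (hb0 : b0 = (1 / 2) * Real.exp a0 *
      (Real.exp a123 * Real.cos ap + Real.exp (-a123) * Real.cos am))
    (hb123 : b123 = (1 / 2) * Real.exp a0 *
      (Real.exp a123 * Real.cos ap - Real.exp (-a123) * Real.cos am))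
    (hb1 : b1 = (1 / 2) * Real.exp a0 *
      (Real.exp a123 * (a1 - a23) * (Real.sin ap / ap) +
        Real.exp (-a123) * (a1 + a23) * (Real.sin am / am)))
    (hb2 : b2 = (1 / 2) * Real.exp a0 *
      (Real.exp a123 * (a2 + a13) * (Real.sin ap / ap) +
        Real.exp (-a123) * (a2 - a13) * (Real.sin am / am)))
    (hb3 : b3 = (1 / 2) * Real.exp a0 *
      (Real.exp a123 * (a3 - a12) * (Real.sin ap / ap) +
        Real.exp (-a123) * (a3 + a12) * (Real.sin am / am)))
    (hb12 : b12 = (1 / 2) * Real.exp a0 *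
      (-(Real.exp a123 * (a3 - a12) * (Real.sin ap / ap)) +
        Real.exp (-a123) * (a3 + a12) * (Real.sin am / am)))
    (hb13 : b13 = (1 / 2) * Real.exp a0 *
      (Real.exp a123 * (a2 + a13) * (Real.sin ap / ap) -
        Real.exp (-a123) * (a2 - a13) * (Real.sin am / am)))
    (hb23 : b23 = (1 / 2) * Real.exp a0 *
      (-(Real.exp a123 * (a1 - a23) * (Real.sin ap / ap)) +
        Real.exp (-a123) * (a1 + a23) * (Real.sin am / am))) :
    expCl A = algebraMap ℝ Cl03 b0 + b1 • e 0 + b2 • e 1 + b3 • e 2 +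
      b12 • (e 0 * e 1) + b13 • (e 0 * e 2) + b23 • (e 1 * e 2) + b123 • I3 := by
  classical
  have hapne : ap ≠ 0 := ne_of_gt happos
  have hamne : am ≠ 0 := ne_of_gt hampos
  set wp : Fin 3 → ℝ := ![a1 - a23, a2 + a13, a3 - a12] with hwp
  set wm : Fin 3 → ℝ := ![a1 + a23, a2 - a13, a3 + a12] with hwm
  have hvp : ι Q03 wp = (a1 - a23) • e 0 + (a2 + a13) • e 1 + (a3 - a12) • e 2 := by
    rw [iota_decomp]; simp [hwp]
  have hvm : ι Q03 wm = (a1 + a23) • e 0 + (a2 - a13) • e 1 + (a3 + a12) • e 2 := by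
    rw [iota_decomp]; simp [hwm]
  have hap2 : ap ^ 2 = (a3 - a12) ^ 2 + (a2 + a13) ^ 2 + (a1 - a23) ^ 2 := by
    rw [hap]; exact Real.sq_sqrt (by positivity)
  have ham2 : am ^ 2 = (a3 + a12) ^ 2 + (a2 - a13) ^ 2 + (a1 + a23) ^ 2 := by
    rw [ham]; exact Real.sq_sqrt (by positivity)
  have hQp : Q03 wp = -(ap ^ 2) := by
    simp only [Q03, QuadraticMap.weightedSumSquares_apply, Fin.sum_univ_three, hwp]
    simp [hap2]; ring
  have hQm : Q03 wm = -(am ^ 2) := by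
    simp only [Q03, QuadraticMap.weightedSumSquares_apply, Fin.sum_univ_three, hwm]
    simp [ham2]; ring
  have hvpsq : ι Q03 wp * ι Q03 wp = algebraMap ℝ Cl03 (-(ap ^ 2)) := by
    rw [CliffordAlgebra.ι_sq_scalar, hQp]
  have hvmsq : ι Q03 wm * ι Q03 wm = algebraMap ℝ Cl03 (-(am ^ 2)) := by
    rw [CliffordAlgebra.ι_sq_scalar, hQm]
  have hup : (ap⁻¹ • ι Q03 wp) * (ap⁻¹ • ι Q03 wp) = -1 := by
    rw [smul_mul_assoc, mul_smul_comm, smul_smul, hvpsq, Algebra.smul_def, ← map_mul]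
    have h : ap⁻¹ * ap⁻¹ * -(ap ^ 2) = -1 := by field_simp
    rw [h, map_neg, map_one]
  have hum : (am⁻¹ • ι Q03 wm) * (am⁻¹ • ι Q03 wm) = -1 := by
    rw [smul_mul_assoc, mul_smul_comm, smul_smul, hvmsq, Algebra.smul_def, ← map_mul]
    have h : am⁻¹ * am⁻¹ * -(am ^ 2) = -1 := by field_simp
    rw [h, map_neg, map_one]
  set φp : ℂ →ₐ[ℝ] Cl03 := Complex.liftAux _ hup with hφp
  set φm : ℂ →ₐ[ℝ] Cl03 := Complex.liftAux _ hum with hφm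
  set p : Cl03 := (1/2 : ℝ) • (1 + I3) with hp
  set q : Cl03 := (1/2 : ℝ) • (1 - I3) with hq
  have hpcomm : ∀ x : Cl03, x * p = p * x := by
    intro x
    rw [hp]
    rw [mul_smul_comm, smul_mul_assoc, mul_add, add_mul, mul_one, one_mul, I3_comm x]
  have hqcomm : ∀ x : Cl03, x * q = q * x := by
    intro x
    rw [hq]
    rw [mul_smul_comm, smul_mul_assoc, mul_sub, sub_mul, mul_one, one_mul, I3_comm x]
  have hpq : p + q = 1 := by rw [hp, hq]; module
  set Mp : Cl03 := algebraMap ℝ Cl03 (a0 + a123) + ι Q03 wp with hMp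
  set Mm : Cl03 := algebraMap ℝ Cl03 (a0 - a123) + ι Q03 wm with hMm
  have hAp : A * p = Mp * p := by
    rw [hA, hva, hbA, hp, hMp, hvp, I3]
    simp only [Algebra.algebraMap_eq_smul_one, mul_add, add_mul, smul_mul_assoc,
      mul_smul_comm, smul_add, smul_smul, mul_one, one_mul, mul_assoc,
      e10, e20, e21, e10', e20', e21', e_sq, e_sq', mul_neg, neg_mul, smul_neg, neg_neg]
    match_scalars <;> ring
  have hAq : A * q = Mm * q := by
    rw [hA, hva, hbA, hq, hMm, hvm, I3]
    simp only [Algebra.algebraMap_eq_smul_one, mul_add, add_mul, mul_sub, sub_mul,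
      smul_mul_assoc, mul_smul_comm, smul_add, smul_sub, smul_smul, mul_one, one_mul, mul_assoc,
      e10, e20, e21, e10', e20', e21', e_sq, e_sq', mul_neg, neg_mul, smul_neg, neg_neg]
    match_scalars <;> ring
  set zp : ℂ := ⟨a0 + a123, ap⟩ with hzp
  set zm : ℂ := ⟨a0 - a123, am⟩ with hzm
  have hφpzp : φp zp = Mp := by
    rw [hφp, Complex.liftAux_apply, hMp]
    congr 1
    show ap • (ap⁻¹ • ι Q03 wp) = ι Q03 wp
    rw [smul_smul, mul_inv_cancel₀ hapne, one_smul]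
  have hφmzm : φm zm = Mm := by
    rw [hφm, Complex.liftAux_apply, hMm]
    congr 1
    show am • (am⁻¹ • ι Q03 wm) = ι Q03 wm
    rw [smul_smul, mul_inv_cancel₀ hamne, one_smul]
  set Lp : ℂ →ₗ[ℝ] Cl03 := (LinearMap.mulRight ℝ p).comp φp.toLinearMap with hLp
  set Lm : ℂ →ₗ[ℝ] Cl03 := (LinearMap.mulRight ℝ q).comp φm.toLinearMap with hLm
  have hkey : ∀ n : ℕ, A ^ n = Lp (zp ^ n) + Lm (zm ^ n) := by
    intro n
    have h1 : A ^ n * p = Mp ^ n * p := pow_mul_central hpcomm hAp n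
    have h2 : A ^ n * q = Mm ^ n * q := pow_mul_central hqcomm hAq n
    have hLpv : Lp (zp ^ n) = Mp ^ n * p := by
      rw [hLp]; simp only [LinearMap.comp_apply, AlgHom.toLinearMap_apply,
        LinearMap.mulRight_apply, map_pow, hφpzp]
    have hLmv : Lm (zm ^ n) = Mm ^ n * q := by
      rw [hLm]; simp only [LinearMap.comp_apply, AlgHom.toLinearMap_apply,
        LinearMap.mulRight_apply, map_pow, hφmzm]
    rw [hLpv, hLmv, ← h1, ← h2, ← mul_add, hpq, mul_one]
  have hLpc : Continuous Lp := IsModuleTopology.continuous_of_linearMap Lp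
  have hLmc : Continuous Lm := IsModuleTopology.continuous_of_linearMap Lm
  have h1 := ((hasSum_cexp zp).map Lp.toAddMonoidHom hLpc).add
    ((hasSum_cexp zm).map Lm.toAddMonoidHom hLmc)
  have hfun : (fun n : ℕ => Lp.toAddMonoidHom ((n.factorial : ℝ)⁻¹ • zp ^ n) +
      Lm.toAddMonoidHom ((n.factorial : ℝ)⁻¹ • zm ^ n)) =
      fun n : ℕ => (n.factorial : ℝ)⁻¹ • A ^ n := by
    funext n
    show Lp ((n.factorial : ℝ)⁻¹ • zp ^ n) + Lm ((n.factorial : ℝ)⁻¹ • zm ^ n) = _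
    rw [map_smul, map_smul, ← smul_add, hkey n]
  rw [Function.comp_def, Function.comp_def] at h1
  rw [hfun] at h1
  have hsum : expCl A = Lp (Complex.exp zp) + Lm (Complex.exp zm) := by
    rw [expCl]
    exact h1.tsum_eq
  rw [hsum]
  -- now the final coordinate computation
  have hre_p : (Complex.exp zp).re = Real.exp (a0 + a123) * Real.cos ap := by
    rw [Complex.exp_re]
  have him_p : (Complex.exp zp).im = Real.exp (a0 + a123) * Real.sin ap := by
    rw [Complex.exp_im]
  have hre_m : (Complex.exp zm).re = Real.exp (a0 - a123) * Real.cos am := by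
    rw [Complex.exp_re]
  have him_m : (Complex.exp zm).im = Real.exp (a0 - a123) * Real.sin am := by
    rw [Complex.exp_im]
  have hLpe : Lp (Complex.exp zp) =
      (Real.exp (a0 + a123) * Real.cos ap) • ((1/2 : ℝ) • (1 + I3)) +
      ((Real.exp (a0 + a123) * Real.sin ap) * ap⁻¹) • (ι Q03 wp * ((1/2 : ℝ) • (1 + I3))) := by
    rw [hLp]
    simp only [LinearMap.comp_apply, AlgHom.toLinearMap_apply, LinearMap.mulRight_apply,
      hφp, Complex.liftAux_apply, hre_p, him_p]
    rw [add_mul, Algebra.algebraMap_eq_smul_one, smul_mul_assoc, one_mul, smul_mul_assoc,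
      smul_mul_assoc, smul_smul, hp]
    rw [smul_smul]
  have hLme : Lm (Complex.exp zm) =
      (Real.exp (a0 - a123) * Real.cos am) • ((1/2 : ℝ) • (1 - I3)) +
      ((Real.exp (a0 - a123) * Real.sin am) * am⁻¹) • (ι Q03 wm * ((1/2 : ℝ) • (1 - I3))) := by
    rw [hLm]
    simp only [LinearMap.comp_apply, AlgHom.toLinearMap_apply, LinearMap.mulRight_apply,
      hφm, Complex.liftAux_apply, hre_m, him_m]
    rw [add_mul, Algebra.algebraMap_eq_smul_one, smul_mul_assoc, one_mul, smul_mul_assoc,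
      smul_mul_assoc, smul_smul, hq]
    rw [smul_smul]
  rw [hLpe, hLme, hvp, hvm, hb0, hb1, hb2, hb3, hb12, hb13, hb23, hb123, I3]
  simp only [Algebra.algebraMap_eq_smul_one, mul_add, add_mul, mul_sub, sub_mul,
    smul_mul_assoc, mul_smul_comm, smul_add, smul_sub, smul_smul, mul_one, one_mul, mul_assoc,
    e10, e20, e21, e10', e20', e21', e_sq, e_sq', mul_neg, neg_mul, smul_neg, neg_neg]
  match_scalars <;>
    (simp only [Real.exp_add, Real.exp_sub, Real.exp_neg]; field_simp <;> ring)
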